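/- arXiv:2602.07484 — 3 statements merged into one kernel-verified Lean document; each statement's English description precedes it below -/
import Mathlib

section
/- Let F be the 10-vertex graph with vertices x_1,…,x_10, edges x_i x_{i+1} for 1 ≤ i ≤ 9, and the additional edge x_3 x_8. Then ex(n,F) ≤ ex(n,C_6) + 10n. -/
/-! Delete, one at a time, vertices of degree at most `9`: this removes at most `9n` edges and
leaves a subgraph whose non-isolated vertices all have degree at least `10`. Such a subgraph of
an `F`-free graph is `C₆`-free, because a `6`-cycle in it extends greedily to a copy of `F`: each
of the four pendant vertices only has to avoid the at most `9` vertices already chosen. -/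

open SimpleGraph

/-- `G` contains a copy of `H` (a subgraph isomorphic to `H`). -/
def Contains {V W : Type*} (G : SimpleGraph V) (H : SimpleGraph W) : Prop :=
  ∃ f : W → V, Function.Injective f ∧ ∀ ⦃a b : W⦄, H.Adj a b → G.Adj (f a) (f b)

/-- `G` is `H`-free. -/
def Free {V W : Type*} (G : SimpleGraph V) (H : SimpleGraph W) : Prop :=
  ¬ Contains G H

/-- The number of edges of `G`. -/
noncomputable def eCard {V : Type*} (G : SimpleGraph V) : ℕ := Nat.card G.edgeSet

/-- The Turán number `ex(n, H)`. -/
noncomputable def exNum (n : ℕ) {W : Type*} (H : SimpleGraph W) : ℕ :=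
  sSup {m | ∃ G : SimpleGraph (Fin n), _root_.Free G H ∧ m = eCard G}

/-- The graph `F`: a path `x₁ ⋯ x₁₀` together with the chord `x₃x₈`. -/
def FGraph : SimpleGraph (Fin 10) :=
  SimpleGraph.fromRel (fun i j => (i.val + 1 = j.val) ∨ (i.val = 2 ∧ j.val = 7))

/-- Adjacency for the triangular pyramid: within a layer, or between consecutive layers. -/
def TPAdj (p q : ℕ × ℕ) : Prop :=
  (q.1 = p.1 ∧ q.2 = p.2 + 1) ∨ (q.1 = p.1 + 1 ∧ (q.2 = p.2 ∨ q.2 = p.2 + 1))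

/-- The triangular pyramid with `k` layers; vertex `(i, t)` is `yₜⁱ`. -/
def TP (k : ℕ) : SimpleGraph {p : ℕ × ℕ // 1 ≤ p.2 ∧ p.2 ≤ p.1 ∧ p.1 ≤ k + 1} :=
  SimpleGraph.fromRel (fun p q => TPAdj p.1 q.1)

noncomputable def crossCount {V : Type*} (G : SimpleGraph V) (A B : Set V) : ℕ :=
  Nat.card {p : V × V // p.1 ∈ A ∧ p.2 ∈ B ∧ G.Adj p.1 p.2}

open Function

variable {V W : Type*}

lemma Free.anti {G G' : SimpleGraph V} {H : SimpleGraph W} (hle : G' ≤ G)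
    (hG : _root_.Free G H) : _root_.Free G' H :=
  fun ⟨f, hf, hadj⟩ => hG ⟨f, hf, fun _ _ h => hle (hadj h)⟩

lemma eCard_le_exNum {n : ℕ} {H : SimpleGraph W} {G : SimpleGraph (Fin n)}
    (hG : _root_.Free G H) : eCard G ≤ exNum n H := by
  refine le_csSup ⟨Nat.card (Sym2 (Fin n)), ?_⟩ ⟨G, hG, rfl⟩
  rintro m ⟨G', -, rfl⟩
  exact Nat.card_le_card_of_injective _ Subtype.val_injective

lemma eCard_deleteIncidenceSet_add_ncard_neighborSet [Finite V] (G : SimpleGraph V) (v : V) :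
    eCard (G.deleteIncidenceSet v) + (G.neighborSet v).ncard = eCard G := by
  classical
  rw [← Nat.card_coe_set_eq (G.neighborSet v),
    ← Nat.card_congr (G.incidenceSetEquivNeighborSet v), eCard, eCard, edgeSet_deleteIncidenceSet,
    Nat.card_coe_set_eq, Nat.card_coe_set_eq, Nat.card_coe_set_eq,
    Set.ncard_sdiff_add_ncard_of_subset (G.incidenceSet_subset v)]

lemma eCard_le_exNum_add_mul_ncard_support {n k : ℕ} {H : SimpleGraph W}
    {G : SimpleGraph (Fin n)}
    (hfree : ∀ G' ≤ G, (∀ v ∈ G'.support, k < (G'.neighborSet v).ncard) → _root_.Free G' H)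
    (G' : SimpleGraph (Fin n)) (hle : G' ≤ G) :
    eCard G' ≤ exNum n H + k * G'.support.ncard := by
  induction hs : G'.support.ncard using Nat.strong_induction_on generalizing G' with
  | _ s ih =>
    by_cases hlow : ∃ v ∈ G'.support, (G'.neighborSet v).ncard ≤ k
    · obtain ⟨v, hv, hdeg⟩ := hlow
      have hsupp : (G'.deleteIncidenceSet v).support.ncard < s :=
        hs ▸ (Set.ncard_le_ncard (G'.support_deleteIncidenceSet_subset v)).trans_lt
          (Set.ncard_sdiff_singleton_lt_of_mem hv)
      have hrest := ih _ hsupp _ ((G'.deleteIncidenceSet_le v).trans hle) rfl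
      calc eCard G'
          = eCard (G'.deleteIncidenceSet v) + (G'.neighborSet v).ncard :=
            (eCard_deleteIncidenceSet_add_ncard_neighborSet G' v).symm
        _ ≤ exNum n H + k * (G'.deleteIncidenceSet v).support.ncard + k := by gcongr
        _ = exNum n H + k * ((G'.deleteIncidenceSet v).support.ncard + 1) := by ring
        _ ≤ exNum n H + k * s := by gcongr; exact hsupp
    · push Not at hlow
      exact (eCard_le_exNum (hfree G' hle hlow)).trans (Nat.le_add_right _ _)

lemma eCard_le_exNum_add_mul {n k : ℕ} {H : SimpleGraph W} {G : SimpleGraph (Fin n)}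
    (hfree : ∀ G' ≤ G, (∀ v ∈ G'.support, k < (G'.neighborSet v).ncard) → _root_.Free G' H) :
    eCard G ≤ exNum n H + k * n := by
  calc eCard G ≤ exNum n H + k * G.support.ncard :=
        eCard_le_exNum_add_mul_ncard_support hfree G le_rfl
    _ ≤ exNum n H + k * n := by
        gcongr
        simpa using Set.ncard_le_card G.support

lemma exists_adj_notMem {G : SimpleGraph V} {v : V} (T : Finset V)
    (hT : T.card < (G.neighborSet v).ncard) : ∃ w, G.Adj v w ∧ w ∉ T := by
  have hdiff := Set.ncard_le_ncard_sdiff_add_ncard (G.neighborSet v) T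
  rw [Set.ncard_coe_finset] at hdiff
  obtain ⟨w, hwN, hwT⟩ := Set.nonempty_of_ncard_ne_zero (s := G.neighborSet v \ T) (by omega)
  exact ⟨w, hwN, hwT⟩

lemma exists_adj_notMem_range {G : SimpleGraph V} {v : V} {k : ℕ} (f : Fin k → V)
    (hk : k < (G.neighborSet v).ncard) : ∃ w, G.Adj v w ∧ w ∉ Set.range f := by
  classical
  obtain ⟨w, hvw, hw⟩ := exists_adj_notMem (Finset.univ.image f)
    ((Finset.card_image_le.trans (by simp)).trans_lt hk)
  exact ⟨w, hvw, by simpa using hw⟩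

lemma free_cycleGraph_six {G : SimpleGraph V} (hF : _root_.Free G FGraph)
    (hdeg : ∀ v ∈ G.support, 9 < (G.neighborSet v).ncard) :
    _root_.Free G (cycleGraph 6) := by
  rintro ⟨c, hc, hadj⟩
  have hc₀ : G.Adj (c 0) (c 1) := hadj (by decide)
  have hc₅ : G.Adj (c 5) (c 0) := hadj (by decide)
  obtain ⟨q₁, hq₁, hq₁c⟩ := exists_adj_notMem_range (G := G) c
    ((by decide : 6 < 10).trans_le (hdeg _ ⟨_, hc₅⟩))
  obtain ⟨q₂, hq₂, hq₂c⟩ := exists_adj_notMem_range (G := G) (Fin.snoc c q₁)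
    ((by decide : 7 < 10).trans_le (hdeg _ ⟨_, hq₁.symm⟩))
  obtain ⟨p₁, hp₁, hp₁c⟩ := exists_adj_notMem_range (G := G) (Fin.snoc (Fin.snoc c q₁) q₂)
    ((by decide : 8 < 10).trans_le (hdeg _ ⟨_, hc₀⟩))
  obtain ⟨p₀, hp₀, hp₀c⟩ := exists_adj_notMem_range (G := G)
    (Fin.cons p₁ (Fin.snoc (Fin.snoc c q₁) q₂))
    ((by decide : 9 < 10).trans_le (hdeg _ ⟨_, hp₁.symm⟩))
  have hinj : Injective (Fin.cons p₀ (Fin.cons p₁ (Fin.snoc (Fin.snoc c q₁) q₂)) : Fin 10 → V) :=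
    Fin.cons_injective_of_injective hp₀c <| Fin.cons_injective_of_injective hp₁c <|
      Fin.snoc_injective_of_injective (Fin.snoc_injective_of_injective hc hq₁c) hq₂c
  have hcopy : (Fin.cons p₀ (Fin.cons p₁ (Fin.snoc (Fin.snoc c q₁) q₂)) : Fin 10 → V) =
      ![p₀, p₁, c 0, c 1, c 2, c 3, c 4, c 5, q₁, q₂] := by
    ext i; fin_cases i <;> rfl
  refine hF ⟨_, hcopy ▸ hinj, fun a b hab => ?_⟩
  fin_cases a <;> fin_cases b <;> simp [FGraph] at hab <;>
    first | exact hadj (by decide) | assumption | exact G.adj_symm ‹_›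

/-- `ex(n, F) ≤ ex(n, C₆) + 10n`. -/
theorem stmt_2 (n : ℕ) :
    exNum n FGraph ≤ exNum n (cycleGraph 6) + 10 * n := by
  refine csSup_le' ?_
  rintro _ ⟨G, hG, rfl⟩
  calc eCard G ≤ exNum n (cycleGraph 6) + 9 * n :=
        eCard_le_exNum_add_mul fun G' hle hdeg => free_cycleGraph_six (hG.anti hle) hdeg
    _ ≤ exNum n (cycleGraph 6) + 10 * n := by gcongr; norm_num
end

section
/- Any graph containing a 6-cycle and having minimum degree at least 10 contains a copy of the graph F. -/
open SimpleGraph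

/- Hang a path of length two off each of the adjacent cycle vertices `g 0` and `g 5`, one vertex
at a time. Each new vertex only has to avoid the at most eight vertices placed before it other than
its own predecessor (which it is adjacent to, hence distinct from), so minimum degree `10` leaves
a free neighbour. -/

theorem SimpleGraph.exists_adj_notMem_of_card_lt {V : Type*} (G : SimpleGraph V) {v : V}
    {S : Finset V} (hS : S.card < Nat.card (G.neighborSet v)) : ∃ u, G.Adj v u ∧ u ∉ S := by
  by_contra! h
  have hle := Set.ncard_le_ncard (fun u hu => h u hu : G.neighborSet v ⊆ S) S.finite_toSet
  rw [Set.ncard_coe_finset, ← Nat.card_coe_set_eq] at hle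
  omega

theorem SimpleGraph.exists_adj_adj_notMem {V : Type*} (G : SimpleGraph V) {S : Finset V}
    (hS : ∀ v, S.card < Nat.card (G.neighborSet v)) (v : V) :
    ∃ a b, G.Adj v a ∧ G.Adj a b ∧ a ∉ S ∧ b ∉ S := by
  obtain ⟨a, hva, haS⟩ := G.exists_adj_notMem_of_card_lt (hS v)
  obtain ⟨b, hab, hbS⟩ := G.exists_adj_notMem_of_card_lt (hS a)
  exact ⟨a, b, hva, hab, haS, hbS⟩

theorem FGraph_adj_iff {i j : Fin 10} :
    FGraph.Adj i j ↔ i.val + 1 = j.val ∨ j.val + 1 = i.val ∨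
      (i.val = 2 ∧ j.val = 7) ∨ (i.val = 7 ∧ j.val = 2) := by
  rw [FGraph, fromRel_adj]
  omega

theorem contains_FGraph_of_cycle_of_paths {V : Type*} {G : SimpleGraph V} {g : Fin 6 → V}
    (hg : Function.Injective g) (hcyc : ∀ ⦃i j⦄, (cycleGraph 6).Adj i j → G.Adj (g i) (g j))
    {u₁ u₂ w₁ w₂ : V} (hu₁ : G.Adj (g 0) u₁) (hu₂ : G.Adj u₁ u₂)
    (hw₁ : G.Adj (g 5) w₁) (hw₂ : G.Adj w₁ w₂)
    (hu : u₁ ∉ Set.range g ∧ u₂ ∉ Set.range g) (hw : w₁ ∉ Set.range g ∧ w₂ ∉ Set.range g)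
    (huw : w₁ ≠ u₁ ∧ w₁ ≠ u₂ ∧ w₂ ≠ u₁ ∧ w₂ ≠ u₂) :
    Contains G FGraph := by
  refine ⟨![u₂, u₁, g 0, g 1, g 2, g 3, g 4, g 5, w₁, w₂], ?_, ?_⟩
  · have hl : List.ofFn ![u₂, u₁, g 0, g 1, g 2, g 3, g 4, g 5, w₁, w₂] =
        [u₂, u₁] ++ List.ofFn g ++ [w₁, w₂] := by
      simp [List.ofFn_succ]
    rw [← List.nodup_ofFn, hl, List.nodup_append, List.nodup_append]
    refine ⟨⟨by simpa using hu₂.ne', List.nodup_ofFn.2 hg, ?_⟩, by simpa using hw₂.ne, ?_⟩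
    · simp only [List.mem_ofFn, List.mem_pair]
      rintro a (rfl | rfl) b hb rfl
      exacts [hu.2 hb, hu.1 hb]
    · simp only [List.mem_append, List.mem_ofFn, List.mem_pair]
      rintro a ((rfl | rfl) | ha) b (rfl | rfl) rfl
      exacts [huw.2.1 rfl, huw.2.2.2 rfl, huw.1 rfl, huw.2.2.1 rfl, hw.1 ha, hw.2 ha]
  · intro i j hij
    rw [FGraph_adj_iff] at hij
    fin_cases i <;> fin_cases j <;> simp at hij ⊢ <;>
      first
        | assumption
        | (apply SimpleGraph.Adj.symm; assumption)
        | exact hcyc (i := _) (j := _) (by decide)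

theorem stmt_4_general {V : Type*} (G : SimpleGraph V)
    (hC : Contains G (cycleGraph 6))
    (hδ : ∀ v : V, 10 ≤ Nat.card (G.neighborSet v)) :
    Contains G FGraph := by
  classical
  obtain ⟨g, hg, hcyc⟩ := hC
  have hdeg (S : Finset V) (hS : S.card ≤ 9) (v : V) : S.card < Nat.card (G.neighborSet v) :=
    Nat.lt_of_lt_of_le (Nat.lt_succ_of_le hS) (hδ v)
  set C := Finset.univ.image g
  have hC : C.card ≤ 6 := Finset.card_image_le.trans (by simp)
  obtain ⟨u₁, u₂, hu₁, hu₂, hu₁C, hu₂C⟩ := G.exists_adj_adj_notMem (hdeg C (by omega)) (g 0)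
  have hC' : (insert u₁ (insert u₂ C)).card ≤ 9 := by
    have := Finset.card_insert_le u₁ (insert u₂ C)
    have := Finset.card_insert_le u₂ C
    omega
  obtain ⟨w₁, w₂, hw₁, hw₂, hw₁C, hw₂C⟩ := G.exists_adj_adj_notMem (hdeg _ hC') (g 5)
  simp only [C, Finset.mem_insert, Finset.mem_image, Finset.mem_univ, true_and,
    not_or] at hu₁C hu₂C hw₁C hw₂C
  exact contains_FGraph_of_cycle_of_paths hg hcyc hu₁ hu₂ hw₁ hw₂ ⟨hu₁C, hu₂C⟩
    ⟨hw₁C.2.2, hw₂C.2.2⟩ ⟨hw₁C.1, hw₁C.2.1, hw₂C.1, hw₂C.2.1⟩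

/-- Any graph containing a `6`-cycle and having minimum degree at least `10`
contains a copy of `F`. -/
theorem stmt_4 {V : Type*} [Fintype V] (G : SimpleGraph V)
    (hC : Contains G (cycleGraph 6))
    (hδ : ∀ v : V, 10 ≤ Nat.card (G.neighborSet v)) :
    Contains G FGraph :=
  stmt_4_general G hC hδ
end

section
/- The triangular pyramid TP_4 has chromatic number 3, and it admits a proper 3-coloring with color classes V_1, V_2, V_3 such that the subgraph induced on V_1 ∪ V_2 is isomorphic to the graph F and V_3 is an independent set. -/
open SimpleGraph

/-! Colour `yₜⁱ` by `(i + t) mod 3`. Every edge of the pyramid raises `i + t` by `1` or `2`, so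
this colouring is proper, and the triangle `y₁¹ y₁² y₂²` rules out two colours. In `TP₄` the ten
vertices of colours `0` and `1` induce the path
`y₁⁵ y₂⁵ y₂⁴ y₁³ y₁² y₂² y₃³ y₃⁴ y₄⁵ y₅⁵` with the single chord `y₂⁴ y₃⁴`, which is `F`. -/

namespace TP

abbrev Vertex (k : ℕ) := {p : ℕ × ℕ // 1 ≤ p.2 ∧ p.2 ≤ p.1 ∧ p.1 ≤ k + 1}

instance (k : ℕ) : Fintype (Vertex k) :=
  Fintype.subtype ((Finset.range (k + 2) ×ˢ Finset.range (k + 2)).filter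
    fun p => 1 ≤ p.2 ∧ p.2 ≤ p.1 ∧ p.1 ≤ k + 1) (by simp; omega)

instance : DecidableRel TPAdj := fun p q => by unfold TPAdj; infer_instance

lemma adj_iff {k : ℕ} {v w : Vertex k} : (TP k).Adj v w ↔ TPAdj v.1 w.1 ∨ TPAdj w.1 v.1 := by
  rw [TP, fromRel_adj, and_iff_right_iff_imp]
  rintro h rfl
  simp only [TPAdj] at h
  omega

instance (k : ℕ) : DecidableRel (TP k).Adj := fun _ _ => decidable_of_iff _ adj_iff.symm

def coloringMod3 (k : ℕ) : (TP k).Coloring (Fin 3) :=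
  Coloring.mk (fun v => ⟨(v.1.1 + v.1.2) % 3, Nat.mod_lt _ three_pos⟩) fun {v w} hadj heq => by
    rw [adj_iff] at hadj
    have := congrArg Fin.val heq
    simp only [TPAdj] at this hadj
    omega

lemma not_colorable_two {k : ℕ} (hk : 1 ≤ k) : ¬ (TP k).Colorable 2 := by
  intro h
  refine h.cliqueFree (by norm_num : 2 < 3)
    {⟨(1, 1), by omega⟩, ⟨(2, 1), by omega⟩, ⟨(2, 2), by omega⟩} ?_
  simp [is3Clique_triple_iff, adj_iff, TPAdj]

theorem chromaticNumber_eq_three {k : ℕ} (hk : 1 ≤ k) : (TP k).chromaticNumber = 3 :=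
  chromaticNumber_eq_iff_colorable_not_colorable.mpr ⟨⟨coloringMod3 k⟩, not_colorable_two hk⟩

end TP

instance : DecidableRel FGraph.Adj := fun _ _ => decidable_of_iff _ (fromRel_adj _ _ _).symm

def FGraph.embeddingTP : FGraph ↪g TP 4 where
  toFun := ![⟨(5, 1), by decide⟩, ⟨(5, 2), by decide⟩, ⟨(4, 2), by decide⟩, ⟨(3, 1), by decide⟩,
    ⟨(2, 1), by decide⟩, ⟨(2, 2), by decide⟩, ⟨(3, 3), by decide⟩, ⟨(4, 3), by decide⟩,
    ⟨(5, 4), by decide⟩, ⟨(5, 5), by decide⟩]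
  inj' := by decide
  map_rel_iff' := by decide

lemma FGraph.range_embeddingTP :
    Set.range FGraph.embeddingTP = {v | TP.coloringMod3 4 v = 0 ∨ TP.coloringMod3 4 v = 1} :=
  Set.ext <| by decide

/-- `TP₄` has chromatic number `3`, and it has a proper `3`-coloring whose first two
color classes induce a copy of `F` and whose third class is independent. -/
theorem stmt_5 :
    (TP 4).chromaticNumber = 3 ∧
    ∃ C : (TP 4).Coloring (Fin 3),
      Nonempty (((TP 4).induce {v | C v = 0 ∨ C v = 1}) ≃g FGraph) ∧
      (∀ u v, C u = 2 → C v = 2 → ¬ (TP 4).Adj u v) := by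
  refine ⟨TP.chromaticNumber_eq_three (by norm_num), TP.coloringMod3 4, ?_,
    fun u v hu hv huv => (TP.coloringMod3 4).valid huv (hu.trans hv.symm)⟩
  rw [← FGraph.range_embeddingTP]
  exact ⟨FGraph.embeddingTP.isoInduceRange.symm⟩
end
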